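/- Let f ∈ ℤ[1/2][a₁,a₂,a₃,a₄,a₆]. Then f is invariant, i.e. φ(f) equals the image of f under the canonical inclusion, if and only if f lies in the ℤ[1/2]-subalgebra of ℤ[1/2][a₁,a₂,a₃,a₄,a₆] generated by b₂, b₄, b₆. (After inverting 2 one has b₈ = (b₂b₆ − b₄²)/4, and the ring of quasimodular forms over ℤ[1/2] is the polynomial ring ℤ[1/2][b₂,b₄,b₆].) -/

import Mathlib

/-!
Invariants form the equalizer of `φ` and `C`, a subalgebra, and `b₂, b₄, b₆` are invariant by
direct computation. Conversely, specialising the translation to `s = -a₁/2`, `t = -a₃/2`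
completes the square in `y`: the composite with `φ` is the algebra endomorphism
`(a₁, a₂, a₃, a₄, a₆) ↦ (0, b₂/4, 0, b₄/2, b₆/4)`, whose image lies in `ℤ[1/2][b₂, b₄, b₆]`,
and it fixes every invariant `f`.
-/

open MvPolynomial

set_option maxSynthPendingDepth 3

noncomputable section

/-- `ℤ[1/2]`, the localization of `ℤ` away from `2`. -/
abbrev Rhalf : Type := Localization.Away (2 : ℤ)

/-- `D = ℤ[1/2][a₁, a₂, a₃, a₄, a₆]`, with variables indexed `0 ↦ a₁, 1 ↦ a₂, 2 ↦ a₃,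
`3 ↦ a₄, 4 ↦ a₆`. -/
abbrev D : Type := MvPolynomial (Fin 5) Rhalf

/-- `D[s, t]`, with `0 ↦ s` and `1 ↦ t`. -/
abbrev Sg : Type := MvPolynomial (Fin 2) D

def a1 : D := X 0
def a2 : D := X 1
def a3 : D := X 2
def a4 : D := X 3
def a6 : D := X 4

def b2 : D := a1 ^ 2 + 4 * a2
def b4 : D := 2 * a4 + a1 * a3
def b6 : D := a3 ^ 2 + 4 * a6

def s : Sg := X 0
def t : Sg := X 1

/-- The right unit: the effect of the coordinate change `y ↦ y + s·x + t` on Weierstrass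
coefficients, over `ℤ[1/2]`. -/
def φ : D →+* Sg :=
  (aeval ![C a1 + 2 * s,
           C a2 - s * C a1 - s ^ 2,
           C a3 + 2 * t,
           C a4 - s * C a3 - t * C a1 - 2 * s * t,
           C a6 - t * C a3 - t ^ 2] : D →ₐ[Rhalf] Sg).toRingHom

def half : Rhalf := IsLocalization.Away.invSelf (2 : ℤ)

lemma two_mul_C_half : (2 : D) * C half = 1 := by
  have h := IsLocalization.Away.mul_invSelf (S := Rhalf) (2 : ℤ)
  rw [map_ofNat] at h
  rw [← map_ofNat C 2, ← map_mul, half, h, map_one]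

def φₐ : D →ₐ[Rhalf] Sg :=
  { φ with commutes' := fun r => by simp [φ] }

lemma φₐ_apply (f : D) : φₐ f = φ f := rfl

lemma φ_b2 : φ b2 = C b2 := by
  simp only [φ, AlgHom.toRingHom_eq_coe, RingHom.coe_coe, map_add, map_mul, map_pow, map_ofNat,
    aeval_X, Matrix.cons_val_zero, Matrix.cons_val_one, b2, a1, a2, s]
  ring

lemma φ_b4 : φ b4 = C b4 := by
  simp only [φ, AlgHom.toRingHom_eq_coe, RingHom.coe_coe, map_add, map_mul, map_ofNat, aeval_X,
    Matrix.cons_val, Matrix.cons_val_zero, b4, a1, a3, a4, s, t]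
  ring

lemma φ_b6 : φ b6 = C b6 := by
  simp only [φ, AlgHom.toRingHom_eq_coe, RingHom.coe_coe, map_add, map_mul, map_pow, map_ofNat,
    aeval_X, Matrix.cons_val, b6, a3, a6, t]
  ring

lemma adjoin_b_le_equalizer :
    Algebra.adjoin Rhalf {b2, b4, b6} ≤ AlgHom.equalizer φₐ (IsScalarTower.toAlgHom Rhalf D Sg) :=
  AlgHom.adjoin_le_equalizer _ _ <| by
    rintro _ (rfl | rfl | rfl)
    exacts [φ_b2, φ_b4, φ_b6]

-- The substitution `s = -a₁/2`, `t = -a₃/2`; this is where `2` has to be invertible.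
def completeSquare : Sg →ₐ[D] D := aeval ![-(C half * a1), -(C half * a3)]

lemma completeSquare_C (f : D) : completeSquare (C f) = f := aeval_C _ _

def completedSquareCoeffs : Fin 5 → D := ![0, half ^ 2 • b2, 0, half • b4, half ^ 2 • b6]

lemma completeSquare_comp_φₐ :
    (completeSquare.restrictScalars Rhalf).comp φₐ = aeval completedSquareCoeffs := by
  have h := two_mul_C_half
  refine MvPolynomial.algHom_ext fun i => ?_
  fin_cases i <;>
    simp only [AlgHom.comp_apply, AlgHom.restrictScalars_apply, φₐ_apply, φ, completeSquare,
      completedSquareCoeffs, AlgHom.toRingHom_eq_coe, RingHom.coe_coe, aeval_X, aeval_C, map_add,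
      map_sub, map_mul, map_pow, map_ofNat, Matrix.cons_val, Matrix.cons_val_zero,
      Matrix.cons_val_one, Matrix.cons_val_fin_one, Fin.isValue, Fin.reduceFinMk, Fin.zero_eta,
      Fin.mk_one, smul_eq_C_mul, a1, a2, a3, a4, a6, b2, b4, b6, s, t]
  · linear_combination (-(X 0 : D)) * h
  · linear_combination (-(X 1 * (1 + 2 * (C half : D)) + X 0 ^ 2 * C half)) * h
  · linear_combination (-(X 2 : D)) * h
  · linear_combination (-(X 3 + (C half : D) * X 0 * X 2)) * h
  · linear_combination (-(X 4 * (1 + 2 * (C half : D)) + X 2 ^ 2 * C half)) * h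

lemma adjoin_completedSquareCoeffs_le :
    Algebra.adjoin Rhalf (Set.range completedSquareCoeffs) ≤ Algebra.adjoin Rhalf {b2, b4, b6} := by
  refine Algebra.adjoin_le (Set.range_subset_iff.2 fun i => ?_)
  fin_cases i <;> simp only [completedSquareCoeffs] <;>
    first
    | exact zero_mem _
    | exact Subalgebra.smul_mem _ (Algebra.subset_adjoin (by simp)) _

/-- After inverting `2`, a polynomial `f ∈ ℤ[1/2][a₁, a₂, a₃, a₄, a₆]` is invariant
(i.e. `φ(f) = f`) if and only if it lies in the `ℤ[1/2]`-subalgebra generated by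
`b₂, b₄, b₆`: the ring of quasimodular forms over `ℤ[1/2]` is `ℤ[1/2][b₂, b₄, b₆]`. -/
theorem invariant_iff_mem_adjoin_b_half (f : D) :
    φ f = C f ↔ f ∈ Algebra.adjoin Rhalf ({b2, b4, b6} : Set D) := by
  refine ⟨fun hf => ?_, fun hf => adjoin_b_le_equalizer hf⟩
  have hfix : completeSquare (φ f) = f := by rw [hf, completeSquare_C]
  have hspec : completeSquare (φ f) = aeval completedSquareCoeffs f :=
    DFunLike.congr_fun completeSquare_comp_φₐ f
  rw [← hfix, hspec]
  exact adjoin_completedSquareCoeffs_le ((aeval_range (R := Rhalf) _).le ⟨f, rfl⟩)
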